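/- arXiv:1505.07604 — 6 statements merged into one kernel-verified Lean document; each statement's English description precedes it below -/
import Mathlib

section
/- If a Banach space X admits a cofinal rectangle-family A ⊆ S(X) × S(X*) such that for every V × Y ∈ A the restriction map Y ∋ x* ↦ x*|_V ∈ V* is surjective, then X is an Asplund space. -/
open TopologicalSpace

/-- The family of all closed separable linear subspaces of a normed space. -/
def SepSub (E : Type*) [NormedAddCommGroup E] [NormedSpace ℝ E] : Set (Submodule ℝ E) :=
  {V | IsClosed (V : Set E) ∧ IsSeparable (V : Set E)}

/-!
Given a closed separable `Z ⊆ X`, cofinality (with the trivial second coordinate) yields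
`V × Y` in the family with `Z ⊆ V`. Surjectivity of the restriction map makes `V*` a continuous
image of the separable space `Y`, and by Hahn–Banach `Z*` is in turn the image of `V*` under
restriction, so it is separable as well.
-/

theorem bot_mem_sepSub (E : Type*) [NormedAddCommGroup E] [NormedSpace ℝ E] :
    (⊥ : Submodule ℝ E) ∈ SepSub E := by
  refine ⟨?_, ?_⟩ <;> rw [Submodule.bot_coe]
  exacts [isClosed_singleton, (Set.countable_singleton 0).isSeparable]

theorem Submodule.separableSpace_dual_of_forall_exists_comp_eq {𝕜 E : Type*}
    [NontriviallyNormedField 𝕜] [NormedAddCommGroup E] [NormedSpace 𝕜 E] {V : Submodule 𝕜 E}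
    {Y : Set (E →L[𝕜] 𝕜)} (hY : IsSeparable Y)
    (hV : ∀ v : V →L[𝕜] 𝕜, ∃ x ∈ Y, x.comp V.subtypeL = v) :
    SeparableSpace (V →L[𝕜] 𝕜) := by
  rw [← isSeparable_univ_iff]
  exact (hY.image (f := fun x : E →L[𝕜] 𝕜 => x.comp V.subtypeL) (by fun_prop)).mono
    fun v _ => hV v

theorem Submodule.separableSpace_dual_of_le {𝕜 E : Type*} [RCLike 𝕜] [NormedAddCommGroup E]
    [NormedSpace 𝕜 E] {Z V : Submodule 𝕜 E} (hZV : Z ≤ V) [SeparableSpace (V →L[𝕜] 𝕜)] :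
    SeparableSpace (Z →L[𝕜] 𝕜) := by
  let ι : Z →L[𝕜] V := Z.subtypeL.codRestrict V fun z => hZV z.2
  have hsurj : Function.Surjective fun w : V →L[𝕜] 𝕜 => w.comp ι := by
    intro g
    obtain ⟨G, hG, -⟩ := exists_extension_norm_eq Z g
    exact ⟨G.comp V.subtypeL, ContinuousLinearMap.ext hG⟩
  exact hsurj.denseRange.separableSpace (by fun_prop)

theorem asplund_of_cofinal_surjective_rectangle_family_general
    {X : Type*} [NormedAddCommGroup X] [NormedSpace ℝ X]
    (A : Set (Submodule ℝ X × Submodule ℝ (X →L[ℝ] ℝ)))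
    (hsub : ∀ p ∈ A, p.1 ∈ SepSub X ∧ p.2 ∈ SepSub (X →L[ℝ] ℝ))
    (hcof : ∀ V₀ ∈ SepSub X, ∀ Y₀ ∈ SepSub (X →L[ℝ] ℝ),
      ∃ p ∈ A, V₀ ≤ p.1 ∧ Y₀ ≤ p.2)
    (hsurj : ∀ p ∈ A, ∀ v : (p.1 : Submodule ℝ X) →L[ℝ] ℝ,
      ∃ x ∈ p.2, x.comp p.1.subtypeL = v) :
    ∀ Z ∈ SepSub X, SeparableSpace ((Z : Submodule ℝ X) →L[ℝ] ℝ) := by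
  intro Z hZ
  obtain ⟨p, hpA, hZp, -⟩ := hcof Z hZ ⊥ (bot_mem_sepSub _)
  have hV : SeparableSpace (p.1 →L[ℝ] ℝ) :=
    Submodule.separableSpace_dual_of_forall_exists_comp_eq (hsub p hpA).2.2 (hsurj p hpA)
  exact Submodule.separableSpace_dual_of_le hZp

/-- If `X` admits a cofinal rectangle-family `A ⊆ S(X) × S(X*)` such that for every
`V × Y ∈ A` the restriction map `Y ∋ x* ↦ x*|_V ∈ V*` is surjective, then `X` is
Asplund, i.e. every closed separable subspace of `X` has separable dual. -/
theorem asplund_of_cofinal_surjective_rectangle_family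
    {X : Type*} [NormedAddCommGroup X] [NormedSpace ℝ X] [CompleteSpace X]
    (A : Set (Submodule ℝ X × Submodule ℝ (X →L[ℝ] ℝ)))
    (hsub : ∀ p ∈ A, p.1 ∈ SepSub X ∧ p.2 ∈ SepSub (X →L[ℝ] ℝ))
    (hcof : ∀ V₀ ∈ SepSub X, ∀ Y₀ ∈ SepSub (X →L[ℝ] ℝ),
      ∃ p ∈ A, V₀ ≤ p.1 ∧ Y₀ ≤ p.2)
    (hsurj : ∀ p ∈ A, ∀ v : (p.1 : Submodule ℝ X) →L[ℝ] ℝ,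
      ∃ x ∈ p.2, x.comp p.1.subtypeL = v) :
    ∀ Z ∈ SepSub X, SeparableSpace ((Z : Submodule ℝ X) →L[ℝ] ℝ) :=
  asplund_of_cofinal_surjective_rectangle_family_general A hsub hcof hsurj
end

section
/- Let X be a Banach space, V₁ ⊆ V₂ ⊆ ⋯ an increasing sequence of closed subspaces of X with closed union V, and Y₁ ⊆ Y₂ ⊆ ⋯ an increasing sequence of closed subspaces of X* with closed union Y. If for every i and every x* ∈ Yᵢ one has ‖x*‖ = ‖x*|_{Vᵢ}‖, then ‖x*‖ = ‖x*|_V‖ for every x* ∈ Y; moreover, if additionally each restriction map Yᵢ → Vᵢ* is surjective and V* ⊆ closure of Y|_V, then the restriction map Y → V* is a surjective isometry. -/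
/-!
A functional in `⋃ Yᵢ` lies in some `Yᵢ`, so it attains its norm on `Vᵢ ⊆ V`; since
`‖x*‖ = ‖x*|_V‖` is a closed condition, it persists on the closure `Y`. Restriction is then an
isometry on the complete space `Y`, so its image in `V*` is complete, hence closed, and an
image that is also dense is all of `V*`.
-/

open Set

namespace ContinuousLinearMap

variable {𝕜 E F : Type*} [NontriviallyNormedField 𝕜] [SeminormedAddCommGroup E]
  [NormedSpace 𝕜 E] [SeminormedAddCommGroup F] [NormedSpace 𝕜 F]

theorem norm_comp_subtypeL_le (f : E →L[𝕜] F) (p : Submodule 𝕜 E) :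
    ‖f.comp p.subtypeL‖ ≤ ‖f‖ :=
  (opNorm_comp_le f p.subtypeL).trans <|
    mul_le_of_le_one_right (norm_nonneg f) (Submodule.norm_subtypeL_le p)

theorem norm_comp_subtypeL_mono (f : E →L[𝕜] F) {p q : Submodule 𝕜 E} (hpq : p ≤ q) :
    ‖f.comp p.subtypeL‖ ≤ ‖f.comp q.subtypeL‖ :=
  opNorm_le_bound _ (norm_nonneg _) fun v => (f.comp q.subtypeL).le_opNorm ⟨v, hpq v.2⟩

theorem norm_eq_norm_comp_subtypeL_of_le (f : E →L[𝕜] F) {p q : Submodule 𝕜 E} (hpq : p ≤ q)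
    (hf : ‖f‖ = ‖f.comp p.subtypeL‖) : ‖f‖ = ‖f.comp q.subtypeL‖ :=
  le_antisymm (hf.le.trans (norm_comp_subtypeL_mono f hpq)) (norm_comp_subtypeL_le f q)

theorem isClosed_setOf_norm_eq_norm_comp_subtypeL (p : Submodule 𝕜 E) :
    IsClosed {f : E →L[𝕜] F | ‖f‖ = ‖f.comp p.subtypeL‖} :=
  isClosed_eq continuous_norm ((compL 𝕜 p E F).flip p.subtypeL).continuous.norm

theorem norm_eq_norm_comp_subtypeL_of_mem_closure_iSup {ι : Type*} [Nonempty ι]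
    {V : ι → Submodule 𝕜 E} {Y : ι → Submodule 𝕜 (E →L[𝕜] F)} (hY : Directed (· ≤ ·) Y)
    {W : Submodule 𝕜 E} (hVW : ∀ i, V i ≤ W)
    (hnorm : ∀ i, ∀ f ∈ Y i, ‖f‖ = ‖f.comp (V i).subtypeL‖) :
    ∀ f ∈ (⨆ i, Y i).topologicalClosure, ‖f‖ = ‖f.comp W.subtypeL‖ := by
  refine fun f hf => closure_minimal (fun g hg => ?_)
    (isClosed_setOf_norm_eq_norm_comp_subtypeL W) hf
  obtain ⟨i, hgi⟩ := (Submodule.mem_iSup_of_directed Y hY).1 hg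
  exact norm_eq_norm_comp_subtypeL_of_le g (hVW i) (hnorm i g hgi)

end ContinuousLinearMap

theorem isClosed_image_of_norm_map_eq {E F 𝓕 : Type*} [NormedAddCommGroup E]
    [NormedAddCommGroup F] [FunLike 𝓕 E F] [AddMonoidHomClass 𝓕 E F] (T : 𝓕)
    {S : AddSubgroup E} (hS : IsComplete (S : Set E)) (hT : ∀ x ∈ S, ‖T x‖ = ‖x‖) :
    IsClosed (T '' S) := by
  have : CompleteSpace S := hS.completeSpace_coe
  have hiso : Isometry ((T : E →+ F).comp S.subtype) :=
    AddMonoidHomClass.isometry_of_norm _ fun x => hT x x.2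
  rw [image_eq_range]
  exact hiso.isClosedEmbedding.isClosed_range

theorem restriction_isometry_limit_general
    {X : Type*} [NormedAddCommGroup X] [NormedSpace ℝ X]
    (V : ℕ → Submodule ℝ X) (Y : ℕ → Submodule ℝ (X →L[ℝ] ℝ))
    (hYmono : Monotone Y)
    (hiso : ∀ i, ∀ x ∈ Y i, ‖x‖ = ‖x.comp (V i).subtypeL‖) :
    (∀ x ∈ (⨆ i, Y i).topologicalClosure,
        ‖x‖ = ‖x.comp ((⨆ i, V i).topologicalClosure).subtypeL‖) ∧
    ((∀ i, ∀ v : (V i : Submodule ℝ X) →L[ℝ] ℝ, ∃ x ∈ Y i, x.comp (V i).subtypeL = v) →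
      (∀ w : ((⨆ i, V i).topologicalClosure : Submodule ℝ X) →L[ℝ] ℝ,
        w ∈ closure {u | ∃ x ∈ (⨆ i, Y i).topologicalClosure,
          x.comp ((⨆ i, V i).topologicalClosure).subtypeL = u}) →
      ∀ w : ((⨆ i, V i).topologicalClosure : Submodule ℝ X) →L[ℝ] ℝ,
        ∃ x ∈ (⨆ i, Y i).topologicalClosure,
          x.comp ((⨆ i, V i).topologicalClosure).subtypeL = w) := by
  set W := (⨆ i, V i).topologicalClosure
  set Yc := (⨆ i, Y i).topologicalClosure
  have hnorm : ∀ x ∈ Yc, ‖x‖ = ‖x.comp W.subtypeL‖ :=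
    ContinuousLinearMap.norm_eq_norm_comp_subtypeL_of_mem_closure_iSup hYmono.directed_le
      (fun i => (le_iSup V i).trans (Submodule.le_topologicalClosure _)) hiso
  refine ⟨hnorm, fun _ hdense w => ?_⟩
  have hclosed : IsClosed ((ContinuousLinearMap.compL ℝ W X ℝ).flip W.subtypeL ''
      (Yc.toAddSubgroup : Set (X →L[ℝ] ℝ))) :=
    isClosed_image_of_norm_map_eq _ (Submodule.isClosed_topologicalClosure _).isComplete
      fun x hx => (hnorm x hx).symm
  exact hclosed.closure_subset (hdense w)

/-- Limit along increasing sequences of subspaces: if each `x* ∈ Yᵢ` attains its norm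
on `Vᵢ`, then each `x*` in the closed union `Y` attains its norm on the closed union `V`;
moreover, if each restriction map `Yᵢ → Vᵢ*` is surjective and `V*` is contained in the
closure of `Y|_V`, then the restriction map `Y → V*` is a surjective isometry. -/
theorem restriction_isometry_limit
    {X : Type*} [NormedAddCommGroup X] [NormedSpace ℝ X] [CompleteSpace X]
    (V : ℕ → Submodule ℝ X) (Y : ℕ → Submodule ℝ (X →L[ℝ] ℝ))
    (hVcl : ∀ i, IsClosed ((V i : Set X))) (hVmono : Monotone V)
    (hYcl : ∀ i, IsClosed ((Y i : Set (X →L[ℝ] ℝ)))) (hYmono : Monotone Y)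
    (hiso : ∀ i, ∀ x ∈ Y i, ‖x‖ = ‖x.comp (V i).subtypeL‖) :
    (∀ x ∈ (⨆ i, Y i).topologicalClosure,
        ‖x‖ = ‖x.comp ((⨆ i, V i).topologicalClosure).subtypeL‖) ∧
    ((∀ i, ∀ v : (V i : Submodule ℝ X) →L[ℝ] ℝ, ∃ x ∈ Y i, x.comp (V i).subtypeL = v) →
      (∀ w : ((⨆ i, V i).topologicalClosure : Submodule ℝ X) →L[ℝ] ℝ,
        w ∈ closure {u | ∃ x ∈ (⨆ i, Y i).topologicalClosure,
          x.comp ((⨆ i, V i).topologicalClosure).subtypeL = u}) →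
      ∀ w : ((⨆ i, V i).topologicalClosure : Submodule ℝ X) →L[ℝ] ℝ,
        ∃ x ∈ (⨆ i, Y i).topologicalClosure,
          x.comp ((⨆ i, V i).topologicalClosure).subtypeL = w) :=
  restriction_isometry_limit_general V Y hYmono hiso
end

section
/- Let X be a Banach space, f : X → (−∞, +∞] proper, V ⊆ X a closed subspace, v ∈ V with f(v) finite, and Y ⊆ X* a subspace such that the restriction map Y ∋ x* ↦ x*|_V ∈ V* is a surjective isometry and (∂_F f(v)) ∩ Y restricted to V equals ∂_F(f|_V)(v). If f|_V is Fréchet differentiable at v and also (−f)|_V is such that −(f|_V)'(v) ∈ ∂_F((−f)|_V)(v) lifts to ∂_F(−f)(v) ∩ Y under restriction, then f is Fréchet differentiable at v and ‖f′(v)‖ = ‖(f|_V)′(v)‖. -/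
/-- The Fréchet subdifferential of an extended-real-valued function. -/
def FrechetSubdiff {E : Type*} [NormedAddCommGroup E] [NormedSpace ℝ E]
    (f : E → EReal) (x : E) : Set (E →L[ℝ] ℝ) :=
  {x' | ∀ ε : ℝ, 0 < ε → ∃ δ : ℝ, 0 < δ ∧ ∀ h : E, 0 < ‖h‖ → ‖h‖ < δ →
    f (x + h) > f x + ((x' h - ε * ‖h‖ : ℝ) : EReal)}

theorem ContinuousLinearMap.eq_of_comp_subtypeL_eq {𝕜 X F : Type*} [NontriviallyNormedField 𝕜]
    [NormedAddCommGroup X] [NormedSpace 𝕜 X] [NormedAddCommGroup F] [NormedSpace 𝕜 F]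
    {V : Submodule 𝕜 X} {Y : Submodule 𝕜 (X →L[𝕜] F)}
    (hiso : ∀ x ∈ Y, ‖x.comp V.subtypeL‖ = ‖x‖) {x y : X →L[𝕜] F} (hx : x ∈ Y) (hy : y ∈ Y)
    (hxy : x.comp V.subtypeL = y.comp V.subtypeL) : x = y := by
  have hcomp : (x - y).comp V.subtypeL = 0 := by
    rw [ContinuousLinearMap.sub_comp, hxy, sub_self]
  rw [← sub_eq_zero, ← norm_eq_zero, ← hiso _ (Y.sub_mem hx hy), hcomp]
  exact norm_zero (E := V →L[𝕜] F)

theorem frechet_differentiable_of_restriction_general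
    {X : Type*} [NormedAddCommGroup X] [NormedSpace ℝ X]
    (f : X → EReal)
    (V : Submodule ℝ X)
    (v : V)
    (Y : Submodule ℝ (X →L[ℝ] ℝ))
    (hiso : ∀ x ∈ Y, ‖x.comp V.subtypeL‖ = ‖x‖)
    (heq : (fun x : X →L[ℝ] ℝ => x.comp V.subtypeL) ''
        (FrechetSubdiff f (v : X) ∩ (Y : Set (X →L[ℝ] ℝ)))
      = FrechetSubdiff (fun u : V => f u) v)
    (heqneg : (fun x : X →L[ℝ] ℝ => x.comp V.subtypeL) ''
        (FrechetSubdiff (fun y : X => -f y) (v : X) ∩ (Y : Set (X →L[ℝ] ℝ)))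
      = FrechetSubdiff (fun u : V => -f u) v)
    (v' : V →L[ℝ] ℝ)
    (hv1 : v' ∈ FrechetSubdiff (fun u : V => f u) v)
    (hv2 : -v' ∈ FrechetSubdiff (fun u : V => -f u) v) :
    ∃ x' : X →L[ℝ] ℝ, x' ∈ FrechetSubdiff f (v : X) ∧
      -x' ∈ FrechetSubdiff (fun y : X => -f y) (v : X) ∧
      x'.comp V.subtypeL = v' ∧ ‖x'‖ = ‖v'‖ := by
  rw [← heq] at hv1
  rw [← heqneg] at hv2
  obtain ⟨x', ⟨hx'f, hx'Y⟩, hx'v : x'.comp V.subtypeL = v'⟩ := hv1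
  obtain ⟨x'', ⟨hx''f, hx''Y⟩, hx''v : x''.comp V.subtypeL = -v'⟩ := hv2
  have hx'' : x'' = -x' :=
    ContinuousLinearMap.eq_of_comp_subtypeL_eq hiso hx''Y (Y.neg_mem hx'Y) <| by
      rw [ContinuousLinearMap.neg_comp, hx''v, hx'v]
  refine ⟨x', hx'f, hx'' ▸ hx''f, hx'v, ?_⟩
  rw [← hiso _ hx'Y, hx'v]

/-- Separable reduction of Fréchet differentiability: if the restriction map from
`Y ⊆ X*` onto `V*` is a surjective isometry, its image of `∂_F f(v) ∩ Y` is
`∂_F (f|_V)(v)` (and likewise for `−f`), and `f|_V` is Fréchet differentiable at `v`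
(i.e. `v* ∈ ∂_F(f|_V)(v)` and `−v* ∈ ∂_F((−f)|_V)(v)`), then `f` is Fréchet
differentiable at `v` with derivative of the same norm as `(f|_V)'(v)`. -/
theorem frechet_differentiable_of_restriction
    {X : Type*} [NormedAddCommGroup X] [NormedSpace ℝ X] [CompleteSpace X]
    (f : X → EReal) (hbot : ∀ y, f y ≠ ⊥) (hproper : ∃ y, f y ≠ ⊤)
    (V : Submodule ℝ X) (hVcl : IsClosed (V : Set X))
    (v : V) (hfv : f v ≠ ⊤)
    (Y : Submodule ℝ (X →L[ℝ] ℝ))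
    (hiso : ∀ x ∈ Y, ‖x.comp V.subtypeL‖ = ‖x‖)
    (hsurj : ∀ w : V →L[ℝ] ℝ, ∃ x ∈ Y, x.comp V.subtypeL = w)
    (heq : (fun x : X →L[ℝ] ℝ => x.comp V.subtypeL) ''
        (FrechetSubdiff f (v : X) ∩ (Y : Set (X →L[ℝ] ℝ)))
      = FrechetSubdiff (fun u : V => f u) v)
    (heqneg : (fun x : X →L[ℝ] ℝ => x.comp V.subtypeL) ''
        (FrechetSubdiff (fun y : X => -f y) (v : X) ∩ (Y : Set (X →L[ℝ] ℝ)))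
      = FrechetSubdiff (fun u : V => -f u) v)
    (v' : V →L[ℝ] ℝ)
    (hv1 : v' ∈ FrechetSubdiff (fun u : V => f u) v)
    (hv2 : -v' ∈ FrechetSubdiff (fun u : V => -f u) v) :
    ∃ x' : X →L[ℝ] ℝ, x' ∈ FrechetSubdiff f (v : X) ∧
      -x' ∈ FrechetSubdiff (fun y : X => -f y) (v : X) ∧
      x'.comp V.subtypeL = v' ∧ ‖x'‖ = ‖v'‖ :=
  frechet_differentiable_of_restriction_general f V v Y hiso heq heqneg v' hv1 hv2
end

section
/- Let X be a Banach space that admits a function f : X → ℝ which is Fréchet differentiable with continuous derivative f′ : X → X*, such that for every closed subspace V of X the set {f′(v)|_V : v ∈ V} is dense in V*. Then the map G sending a countable set C ⊆ X to f′(sp_ℚ C) satisfies: (sp̄ C)* ⊆ closure of G(C)|_{sp̄ C} for every countable C ⊆ X. -/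
/-- The set of finite rational linear combinations of elements of `C`. -/
def ratSpan {X : Type*} [NormedAddCommGroup X] [NormedSpace ℝ X] (C : Set X) : Set X :=
  {x | ∃ (n : ℕ) (c : Fin n → ℚ) (v : Fin n → X),
    (∀ i, v i ∈ C) ∧ x = ∑ i, (c i : ℝ) • v i}

/-!
Rational coefficient vectors are dense among real ones, so `sp_ℚ C` is dense in `sp̄ C`. The
continuous map `x ↦ f'(x)|_{sp̄ C}` therefore carries `sp_ℚ C` onto a dense subset of the image of
`sp̄ C`, and that image is dense in `(sp̄ C)*` by hypothesis.
-/

open Set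

theorem span_subset_closure_ratSpan {X : Type*} [NormedAddCommGroup X] [NormedSpace ℝ X]
    (C : Set X) : (Submodule.span ℝ C : Set X) ⊆ closure (ratSpan C) := by
  intro x hx
  obtain ⟨n, c, v, rfl⟩ := Submodule.mem_span_set'.1 hx
  set L : (Fin n → ℝ) → X := fun a => ∑ i, a i • (v i : X)
  have hL : Continuous L := by fun_prop
  have hdense : DenseRange (Pi.map fun _ : Fin n => ((↑) : ℚ → ℝ)) :=
    DenseRange.piMap fun _ => Rat.denseRange_cast
  have hrat : L '' range (Pi.map fun _ : Fin n => ((↑) : ℚ → ℝ)) ⊆ ratSpan C := by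
    rintro _ ⟨_, ⟨q, rfl⟩, rfl⟩
    exact ⟨n, q, fun i => v i, fun i => (v i).2, rfl⟩
  refine closure_mono hrat (image_closure_subset_closure_image hL ⟨c, ?_, rfl⟩)
  rw [hdense.closure_range]
  trivial

theorem topologicalClosure_span_subset_closure_ratSpan {X : Type*} [NormedAddCommGroup X]
    [NormedSpace ℝ X] (C : Set X) :
    ((Submodule.span ℝ C).topologicalClosure : Set X) ⊆ closure (ratSpan C) :=
  closure_minimal (span_subset_closure_ratSpan C) isClosed_closure

theorem closure_image_subset_of_subset_closure {α β : Type*} [TopologicalSpace α]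
    [TopologicalSpace β] {T : α → β} (hT : Continuous T) {A B : Set α}
    (hAB : A ⊆ closure B) : closure (T '' A) ⊆ closure (T '' B) := by
  rw [← closure_image_closure hT (s := B)]
  exact closure_mono (image_mono hAB)

theorem asplund_generator_property_of_smooth_function_general
    {X : Type*} [NormedAddCommGroup X] [NormedSpace ℝ X]
    (f' : X → (X →L[ℝ] ℝ))
    (hcont : Continuous f')
    (hdense : ∀ V : Submodule ℝ X, IsClosed (V : Set X) →
      ∀ w : V →L[ℝ] ℝ, w ∈ closure {u | ∃ v ∈ V, (f' v).comp V.subtypeL = u}) :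
    ∀ C : Set X, C.Countable →
      ∀ w : ((Submodule.span ℝ C).topologicalClosure : Submodule ℝ X) →L[ℝ] ℝ,
        w ∈ closure {u | ∃ x ∈ ratSpan C,
          (f' x).comp (Submodule.span ℝ C).topologicalClosure.subtypeL = u} := by
  intro C _ w
  have hrestrict :
      Continuous fun x => (f' x).comp (Submodule.span ℝ C).topologicalClosure.subtypeL :=
    hcont.clm_comp continuous_const
  exact closure_image_subset_of_subset_closure hrestrict
    (topologicalClosure_span_subset_closure_ratSpan C)
    (hdense _ (Submodule.isClosed_topologicalClosure _) w)

/-- If `X` admits a Fréchet smooth function `f` with continuous derivative `f'` whose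
restricted derivatives `{f'(v)|_V : v ∈ V}` are dense in `V*` for every closed
subspace `V`, then for every countable `C ⊆ X` the restrictions to `sp̄ C` of the
functionals `f'(x)`, `x ∈ sp_ℚ C`, are dense in `(sp̄ C)*`. -/
theorem asplund_generator_property_of_smooth_function
    {X : Type*} [NormedAddCommGroup X] [NormedSpace ℝ X] [CompleteSpace X]
    (f : X → ℝ) (f' : X → (X →L[ℝ] ℝ))
    (hdiff : ∀ x, HasFDerivAt f (f' x) x)
    (hcont : Continuous f')
    (hdense : ∀ V : Submodule ℝ X, IsClosed (V : Set X) →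
      ∀ w : V →L[ℝ] ℝ, w ∈ closure {u | ∃ v ∈ V, (f' v).comp V.subtypeL = u}) :
    ∀ C : Set X, C.Countable →
      ∀ w : ((Submodule.span ℝ C).topologicalClosure : Submodule ℝ X) →L[ℝ] ℝ,
        w ∈ closure {u | ∃ x ∈ ratSpan C,
          (f' x).comp (Submodule.span ℝ C).topologicalClosure.subtypeL = u} :=
  asplund_generator_property_of_smooth_function_general f' hcont hdense
end

section
/- Let K be a compact Hausdorff topological space. If A, B ∈ Clop(K) (clopen subsets of K) and the uniform distance between the indicator functions 𝟙_B and a linear combination f of indicator functions of pairwise disjoint clopen sets A₁, …, Aₙ satisfies ‖𝟙_B − f‖_∞ < 1/4, then B is a union of finitely many of the sets A₁, …, Aₙ. -/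
/-!
On each `Aᵢ` the combination `f = ∑ cᵢ 𝟙_{Aᵢ}` takes the constant value `cᵢ`, and it vanishes
off their union. Since `𝟙_B` only takes the values `0` and `1`, being uniformly closer than `1/2`
to `f` forces `B = {f > 1/2}`, which is then the union of the `Aᵢ` with `cᵢ > 1/2`.
-/

open Set Function

theorem eq_setOf_half_lt_of_abs_indicator_one_sub_lt {α : Type*} {B : Set α} {f : α → ℝ}
    (hf : ∀ x, |indicator B (fun _ => (1 : ℝ)) x - f x| < 1 / 2) :
    B = {x | 1 / 2 < f x} := by
  ext x
  have hx := abs_sub_lt_iff.1 (hf x)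
  by_cases hxB : x ∈ B
  · simp only [indicator_of_mem hxB] at hx
    simp only [hxB, mem_ofPred_eq, true_iff]
    linarith
  · simp only [indicator_of_notMem hxB] at hx
    simp only [hxB, mem_ofPred_eq, false_iff, not_lt]
    linarith

section DisjointIndicators

variable {α ι : Type*} [Fintype ι] {A : ι → Set α}

theorem sum_mul_indicator_one_of_mem (hA : Pairwise (Disjoint on A)) (c : ι → ℝ) {x : α}
    {i : ι} (hx : x ∈ A i) :
    ∑ j, c j * indicator (A j) (fun _ => (1 : ℝ)) x = c i := by
  rw [Fintype.sum_eq_single i fun j hj => by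
    simp [indicator_of_notMem ((hA hj).notMem_of_mem_right hx)]]
  simp [indicator_of_mem hx]

theorem sum_mul_indicator_one_of_notMem_iUnion (c : ι → ℝ) {x : α} (hx : x ∉ ⋃ i, A i) :
    ∑ j, c j * indicator (A j) (fun _ => (1 : ℝ)) x = 0 :=
  Finset.sum_eq_zero fun j _ => by
    simp [indicator_of_notMem fun hj => hx (mem_iUnion_of_mem j hj)]

theorem setOf_lt_sum_mul_indicator_one (hA : Pairwise (Disjoint on A)) (c : ι → ℝ) {t : ℝ}
    (ht : 0 ≤ t) :
    {x | t < ∑ j, c j * indicator (A j) (fun _ => (1 : ℝ)) x} =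
      ⋃ i ∈ Finset.univ.filter (t < c ·), A i := by
  ext x
  simp only [mem_ofPred_eq, mem_iUnion, Finset.mem_filter, Finset.mem_univ, true_and,
    exists_prop]
  by_cases hx : x ∈ ⋃ i, A i
  · obtain ⟨i, hxi⟩ := mem_iUnion.1 hx
    rw [sum_mul_indicator_one_of_mem hA c hxi]
    refine ⟨fun h => ⟨i, h, hxi⟩, fun ⟨j, hj, hxj⟩ => ?_⟩
    obtain rfl : j = i := by
      by_contra hji
      exact (hA hji).notMem_of_mem_left hxj hxi
    exact hj
  · rw [sum_mul_indicator_one_of_notMem_iUnion c hx]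
    exact iff_of_false ht.not_gt fun ⟨i, _, hxi⟩ => hx (mem_iUnion_of_mem i hxi)

end DisjointIndicators

theorem clopen_indicator_approximation_general
    {K : Type*}
    (B : Set K)
    (n : ℕ) (A : Fin n → Set K)
    (hdisj : ∀ i j, i ≠ j → Disjoint (A i) (A j))
    (c : Fin n → ℝ)
    (happrox : ∀ x : K,
      |indicator B (fun _ => (1 : ℝ)) x - ∑ i, c i * indicator (A i) (fun _ => (1 : ℝ)) x|
        < 1 / 4) :
    ∃ s : Finset (Fin n), B = ⋃ i ∈ s, A i := by
  refine ⟨Finset.univ.filter (1 / 2 < c ·), ?_⟩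
  rw [← setOf_lt_sum_mul_indicator_one (fun i j => hdisj i j) c (by norm_num)]
  exact eq_setOf_half_lt_of_abs_indicator_one_sub_lt fun x => (happrox x).trans (by norm_num)

/-- If the indicator function of a clopen set `B` is uniformly within `1/4` of a linear
combination of indicator functions of pairwise disjoint clopen sets `A₁, …, Aₙ`, then
`B` is the union of finitely many of the sets `Aᵢ`. -/
theorem clopen_indicator_approximation
    {K : Type*} [TopologicalSpace K] [CompactSpace K] [T2Space K]
    (B : Set K) (hB : IsClopen B)
    (n : ℕ) (A : Fin n → Set K) (hA : ∀ i, IsClopen (A i))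
    (hdisj : ∀ i j, i ≠ j → Disjoint (A i) (A j))
    (c : Fin n → ℝ)
    (happrox : ∀ x : K,
      |indicator B (fun _ => (1 : ℝ)) x - ∑ i, c i * indicator (A i) (fun _ => (1 : ℝ)) x|
        < 1 / 4) :
    ∃ s : Finset (Fin n), B = ⋃ i ∈ s, A i :=
  clopen_indicator_approximation_general B n A hdisj c happrox
end

section
/- Let X be a Banach space, f : X → (−∞, +∞] proper, and suppose x* ∉ ∂_F f(x) at a point x with f(x) finite. Then there exists ε > 0 such that for every δ > 0 there exists h with 0 < ‖h‖ < δ and f(x+h) − f(x) − x*(h) ≤ −ε‖h‖; moreover, for any x₀, x₀*, q′ with ‖x₀ − x‖, ‖x₀* − x*‖, |f(x) − q′| all smaller than a suitable η > 0 (depending only on ε, δ, ‖x*‖ and a rational lower bound q on ‖h‖), the vector h′ := h + (x − x₀) satisfies f(x₀ + h′) − q′ − x₀*(h′) < −(2/3)ε‖h′‖ and q − η < ‖h′‖ < δ/2. -/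
/-!
Failing the Fréchet inequality at `x` for one `ε > 0` produces, in every ball, a direction `h`
with `f (x + h) ≤ f x + x* h - ε ‖h‖`. Moving the base point, the functional and the value by at
most `η` changes `x* h` and `‖h‖` by `O(η)`, while the margin `ε ‖h‖ - (2/3) ε ‖h'‖` is at least
`ε q / 3 - O(η)`; the bound on `η` is chosen so that this margin survives.
-/

theorem ContinuousLinearMap.norm_apply_sub_apply_le {𝕜 E F : Type*} [NontriviallyNormedField 𝕜]
    [SeminormedAddCommGroup E] [NormedSpace 𝕜 E] [SeminormedAddCommGroup F] [NormedSpace 𝕜 F]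
    (φ ψ : E →L[𝕜] F) (u v : E) :
    ‖φ u - ψ v‖ ≤ ‖φ‖ * ‖u - v‖ + ‖φ - ψ‖ * ‖v‖ := by
  calc ‖φ u - ψ v‖ = ‖φ (u - v) + (φ - ψ) v‖ := by simp
    _ ≤ ‖φ (u - v)‖ + ‖(φ - ψ) v‖ := norm_add_le _ _
    _ ≤ ‖φ‖ * ‖u - v‖ + ‖φ - ψ‖ * ‖v‖ := add_le_add (φ.le_opNorm _) ((φ - ψ).le_opNorm _)

section

variable {X : Type*} [NormedAddCommGroup X] [NormedSpace ℝ X]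

theorem exists_pos_forall_exists_le_of_not_mem_frechetSubdiff {f : X → EReal} {x : X}
    {x' : X →L[ℝ] ℝ} (hnot : x' ∉ FrechetSubdiff f x) :
    ∃ ε : ℝ, 0 < ε ∧ ∀ δ : ℝ, 0 < δ → ∃ h : X, 0 < ‖h‖ ∧ ‖h‖ < δ ∧
      f (x + h) ≤ f x + ((x' h - ε * ‖h‖ : ℝ) : EReal) := by
  simpa [FrechetSubdiff] using hnot

theorem add_apply_sub_mul_norm_lt_of_perturb {x' x₀' : X →L[ℝ] ℝ} {h h' : X}
    {fx q' ε δ q η : ℝ} (hε : 0 < ε) (hδ : 0 < δ) (hqh : q < ‖h‖)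
    (hη : η < q * ε / (3 * (1 + ‖x'‖ + δ / 2 + 4 * ε / 3)))
    (hhh' : ‖h - h'‖ ≤ η) (hh' : ‖h'‖ < δ / 2) (hx' : ‖x₀' - x'‖ ≤ η) (hfx : |fx - q'| ≤ η) :
    fx + x' h - ε * ‖h‖ < q' + x₀' h' - 2 / 3 * ε * ‖h'‖ := by
  have hη₀ : 0 ≤ η := (norm_nonneg _).trans hhh'
  have hmargin : η * (3 * (1 + ‖x'‖ + δ / 2 + 4 * ε / 3)) < q * ε :=
    (lt_div_iff₀ (by positivity)).1 hη
  have happly : x' h - x₀' h' ≤ ‖x'‖ * η + η * ‖h'‖ := by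
    calc x' h - x₀' h' ≤ ‖x' h - x₀' h'‖ := Real.le_norm_self _
      _ ≤ ‖x'‖ * ‖h - h'‖ + ‖x' - x₀'‖ * ‖h'‖ := x'.norm_apply_sub_apply_le x₀' h h'
      _ ≤ ‖x'‖ * η + η * ‖h'‖ := by
        rw [norm_sub_rev x']
        gcongr
  have hnorm : ‖h'‖ ≤ ‖h‖ + η := by
    linarith [norm_sub_norm_le h' h, norm_sub_rev h h']
  have hval := (abs_le.1 hfx).2
  have hεh : ε * q < ε * ‖h‖ := mul_lt_mul_of_pos_left hqh hε
  have hηh' : η * ‖h'‖ ≤ η * (δ / 2) := mul_le_mul_of_nonneg_left hh'.le hη₀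
  have hεh' : ε * ‖h'‖ ≤ ε * (‖h‖ + η) := mul_le_mul_of_nonneg_left hnorm hε.le
  have hηε : 0 ≤ η * ε := mul_nonneg hη₀ hε.le
  linarith

end

theorem perturbation_estimate_of_not_mem_frechetSubdiff_general
    {X : Type*} [NormedAddCommGroup X] [NormedSpace ℝ X]
    (f : X → EReal)
    (x : X) (fx : ℝ) (hfx : f x = (fx : EReal))
    (x' : X →L[ℝ] ℝ) (hnot : x' ∉ FrechetSubdiff f x) :
    ∃ ε : ℝ, 0 < ε ∧
      (∀ δ : ℝ, 0 < δ → ∃ h : X, 0 < ‖h‖ ∧ ‖h‖ < δ ∧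
        f (x + h) ≤ ((fx + x' h - ε * ‖h‖ : ℝ) : EReal)) ∧
      (∀ δ : ℝ, 0 < δ → ∀ h : X, 0 < ‖h‖ → ‖h‖ < δ / 3 →
        f (x + h) ≤ ((fx + x' h - ε * ‖h‖ : ℝ) : EReal) →
        ∀ q : ℚ, 0 < (q : ℝ) → (q : ℝ) < ‖h‖ →
        ∀ η : ℝ, 0 < η →
          η < min (δ / 6) (min ((q : ℝ) / 2)
            ((q : ℝ) * ε / (3 * (1 + ‖x'‖ + δ / 2 + 4 * ε / 3)))) →
        ∀ (x₀ : X) (x₀' : X →L[ℝ] ℝ) (q' : ℝ),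
          ‖x₀ - x‖ ≤ η → ‖x₀' - x'‖ ≤ η → |fx - q'| ≤ η →
          ((q : ℝ) - η < ‖h + (x - x₀)‖ ∧ ‖h + (x - x₀)‖ < δ / 2 ∧
            f (x₀ + (h + (x - x₀)))
              < ((q' + x₀' (h + (x - x₀)) - (2 / 3) * ε * ‖h + (x - x₀)‖ : ℝ) : EReal))) := by
  obtain ⟨ε, hε, hviol⟩ := exists_pos_forall_exists_le_of_not_mem_frechetSubdiff hnot
  refine ⟨ε, hε, fun δ hδ => ?_, ?_⟩
  · obtain ⟨h, hpos, hlt, hle⟩ := hviol δ hδ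
    refine ⟨h, hpos, hlt, ?_⟩
    rwa [hfx, ← EReal.coe_add, ← add_sub_assoc] at hle
  intro δ hδ h _ hhδ hle q _ hqh η _ hη x₀ x₀' q' hx₀ hx₀' hq'
  set h' := h + (x - x₀)
  have hhh' : ‖h - h'‖ ≤ η := by simpa [h', norm_sub_rev x₀] using hx₀
  have hnorm := abs_le.1 ((abs_norm_sub_norm_le h h').trans hhh')
  have hηδ : η < δ / 6 := hη.trans_le (min_le_left _ _)
  have hh'δ : ‖h'‖ < δ / 2 := by linarith
  refine ⟨by linarith, hh'δ, ?_⟩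
  rw [show x₀ + h' = x + h by simp only [h']; abel]
  refine hle.trans_lt (EReal.coe_lt_coe_iff.2 ?_)
  exact add_apply_sub_mul_norm_lt_of_perturb hε hδ hqh
    (hη.trans_le ((min_le_right _ _).trans (min_le_right _ _))) hhh' hh'δ hx₀' hq'

/-- Quantitative perturbation estimate: if `x* ∉ ∂_F f(x)`, there is `ε > 0` such that
for every `δ > 0` some `h` with `0 < ‖h‖ < δ` violates the subdifferential inequality;
moreover, any witness `h` with `‖h‖ < δ/3`, any rational `q ∈ (0, ‖h‖)` and any
sufficiently small `η > 0` admit a stable perturbed estimate: for all `x₀, x₀*, q′`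
within `η` of `x, x*, f(x)`, the vector `h′ := h + (x − x₀)` satisfies
`q − η < ‖h′‖ < δ/2` and `f(x₀ + h′) − q′ − x₀*(h′) < −(2/3)ε‖h′‖`. -/
theorem perturbation_estimate_of_not_mem_frechetSubdiff
    {X : Type*} [NormedAddCommGroup X] [NormedSpace ℝ X] [CompleteSpace X]
    (f : X → EReal) (hbot : ∀ y, f y ≠ ⊥) (hproper : ∃ y, f y ≠ ⊤)
    (x : X) (fx : ℝ) (hfx : f x = (fx : EReal))
    (x' : X →L[ℝ] ℝ) (hnot : x' ∉ FrechetSubdiff f x) :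
    ∃ ε : ℝ, 0 < ε ∧
      (∀ δ : ℝ, 0 < δ → ∃ h : X, 0 < ‖h‖ ∧ ‖h‖ < δ ∧
        f (x + h) ≤ ((fx + x' h - ε * ‖h‖ : ℝ) : EReal)) ∧
      (∀ δ : ℝ, 0 < δ → ∀ h : X, 0 < ‖h‖ → ‖h‖ < δ / 3 →
        f (x + h) ≤ ((fx + x' h - ε * ‖h‖ : ℝ) : EReal) →
        ∀ q : ℚ, 0 < (q : ℝ) → (q : ℝ) < ‖h‖ →
        ∀ η : ℝ, 0 < η →
          η < min (δ / 6) (min ((q : ℝ) / 2)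
            ((q : ℝ) * ε / (3 * (1 + ‖x'‖ + δ / 2 + 4 * ε / 3)))) →
        ∀ (x₀ : X) (x₀' : X →L[ℝ] ℝ) (q' : ℝ),
          ‖x₀ - x‖ ≤ η → ‖x₀' - x'‖ ≤ η → |fx - q'| ≤ η →
          ((q : ℝ) - η < ‖h + (x - x₀)‖ ∧ ‖h + (x - x₀)‖ < δ / 2 ∧
            f (x₀ + (h + (x - x₀)))
              < ((q' + x₀' (h + (x - x₀)) - (2 / 3) * ε * ‖h + (x - x₀)‖ : ℝ) : EReal))) :=
  perturbation_estimate_of_not_mem_frechetSubdiff_general f x fx hfx x' hnot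
end
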